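/- arXiv:2206.06042 — 2 statements merged into one kernel-verified Lean document; each statement's English description precedes it below -/
import Mathlib

section
/- Let (L, σ) be a σ-extension of a σ-field (K, σ). If a, b ∈ L are σ-algebraic over K, then σ(a) and a·b are σ-algebraic over K. -/
/-!
For a σ-stable `K`, `a` is σ-algebraic over `K` exactly when the `K`-span of the
`Nᵢ(a)` is finitely generated: a skew polynomial of degree `n` killing `a` expresses `Nₙ(a)`
through the lower ones, and the σ-semilinear map `x ↦ σ(x)·a` sends `Nᵢ(a)` to `Nᵢ₊₁(a)`, so the
span of `N₀(a), …, Nₙ₋₁(a)` contains all of them; conversely a finitely generated span forces a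
linear relation among the `Nᵢ(a)`. Since `Nᵢ(ab) = Nᵢ(a)·Nᵢ(b)`, the span for `ab` lies in the
product of the spans for `a` and `b`. For `σ(a)`, apply `σ` to the coefficients of a relation
for `a`, using `Nᵢ(σ a) = σ(Nᵢ(a))`.
-/

open Polynomial

variable {K : Type*} [Field K]

/-- `skewN σ i a = σ^{i-1}(a)⋯σ(a)·a`, with `skewN σ 0 a = 1`. -/
def skewN (σ : K →+* K) : ℕ → K → K
  | 0, _ => 1
  | i + 1, a => σ (skewN σ i a) * a

/-- Right evaluation of a skew polynomial `P = Σ aᵢ Tⁱ` at `a`: `P(a) = Σ aᵢ Nᵢ(a)`. -/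
noncomputable def skewEval (σ : K →+* K) (P : Polynomial K) (a : K) : K :=
  ∑ i ∈ P.support, P.coeff i * skewN σ i a

/-- Multiplication in the skew polynomial ring `K[T;σ]` (with `T·a = σ(a)·T`),
using `Polynomial K` as the carrier of coefficient sequences. -/
noncomputable def skewMul (σ : K →+* K) (P Q : Polynomial K) : Polynomial K :=
  ∑ i ∈ P.support, ∑ j ∈ Q.support,
    Polynomial.C (P.coeff i * (⇑σ)^[i] (Q.coeff j)) * Polynomial.X ^ (i + j)

/-- In a σ-extension `(L, σL)` of the σ-subfield `K`, the element `a` is σ-algebraic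
over `K`: it is a right root of some nonzero skew polynomial with coefficients in `K`. -/
def IsSkewAlgebraic {L : Type*} [Field L] (σL : L →+* L) (K : Subfield L) (a : L) : Prop :=
  ∃ P : Polynomial L, P ≠ 0 ∧ (∀ i, P.coeff i ∈ K) ∧ skewEval σL P a = 0

section SkewEval

variable (σ : K →+* K)

lemma skewN_succ (i : ℕ) (a : K) : skewN σ (i + 1) a = σ (skewN σ i a) * a := rfl

lemma skewN_map (a : K) : ∀ i, skewN σ i (σ a) = σ (skewN σ i a)
  | 0 => by simp [skewN]
  | i + 1 => by rw [skewN_succ, skewN_succ, skewN_map a i, map_mul]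

lemma skewN_mul (a b : K) : ∀ i, skewN σ i (a * b) = skewN σ i a * skewN σ i b
  | 0 => by simp [skewN]
  | i + 1 => by rw [skewN_succ, skewN_succ, skewN_succ, skewN_mul a b i, map_mul]; ring

lemma skewEval_eq_sum_of_support_subset {P : K[X]} {s : Finset ℕ} (hs : P.support ⊆ s) (a : K) :
    skewEval σ P a = ∑ i ∈ s, P.coeff i * skewN σ i a :=
  Finset.sum_subset hs fun i _ hi => by rw [notMem_support_iff.mp hi, zero_mul]

lemma skewEval_map_apply (P : K[X]) (a : K) :
    skewEval σ (P.map σ) (σ a) = σ (skewEval σ P a) := by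
  simp only [skewEval, support_map_of_injective P σ.injective, coeff_map, skewN_map, map_sum,
    map_mul]

end SkewEval

section SkewAlgebraic

variable {L : Type*} [Field L] (σ : L →+* L) (K : Subfield L)

def skewNSpan (a : L) : Submodule K L :=
  Submodule.span K (Set.range fun i => skewN σ i a)

def skewShift (hK : ∀ x ∈ K, σ x ∈ K) (a : L) : L →ₛₗ[σ.restrict K K hK] L where
  toFun x := σ x * a
  map_add' x y := by rw [map_add, add_mul]
  map_smul' c x := by
    change σ (c * x) * a = σ c * (σ x * a)
    rw [map_mul, mul_assoc]

variable {σ K}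

lemma skewN_mem_skewNSpan (i : ℕ) (a : L) : skewN σ i a ∈ skewNSpan σ K a :=
  Submodule.subset_span ⟨i, rfl⟩

lemma skewNSpan_mul_le (a b : L) : skewNSpan σ K (a * b) ≤ skewNSpan σ K a * skewNSpan σ K b :=
  Submodule.span_le.mpr <| Set.range_subset_iff.mpr fun i => by
    rw [skewN_mul]
    exact Submodule.mul_mem_mul (skewN_mem_skewNSpan i a) (skewN_mem_skewNSpan i b)

lemma IsSkewAlgebraic.fg_skewNSpan (hK : ∀ x ∈ K, σ x ∈ K) {a : L}
    (ha : IsSkewAlgebraic σ K a) : (skewNSpan σ K a).FG := by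
  obtain ⟨P, hP0, hPK, hPa⟩ := ha
  set n := P.natDegree
  set W : Submodule K L := Submodule.span K ((fun j => skewN σ j a) '' Set.Iio n)
  have hlead : P.coeff n ≠ 0 := leadingCoeff_ne_zero.mpr hP0
  have hlow : ∀ j < n, skewN σ j a ∈ W := fun j hj => Submodule.subset_span ⟨j, hj, rfl⟩
  have htop : skewN σ n a ∈ W := by
    have hrel : P.coeff n * skewN σ n a = -∑ i ∈ Finset.range n, P.coeff i * skewN σ i a := by
      rw [skewEval_eq_sum_of_support_subset σ supp_subset_range_natDegree_succ,
        Finset.sum_range_succ] at hPa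
      exact eq_neg_of_add_eq_zero_right hPa
    have hsum : P.coeff n * skewN σ n a ∈ W := by
      rw [hrel]
      refine W.neg_mem (W.sum_mem fun i hi => ?_)
      exact W.smul_mem ⟨_, hPK i⟩ (hlow i (Finset.mem_range.mp hi))
    exact (W.smul_mem_iff (s := (⟨_, hPK n⟩ : K)) (Subtype.coe_ne_coe.mp hlead)).mp hsum
  have hle : ∀ j ≤ n, skewN σ j a ∈ W := fun j hj =>
    hj.lt_or_eq.elim (hlow j) fun h => h ▸ htop
  have hstable : W ≤ W.comap (skewShift σ K hK a) := Submodule.span_le.mpr <| by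
    rintro _ ⟨j, hj, rfl⟩
    exact hle (j + 1) hj
  have hall : ∀ i, skewN σ i a ∈ W := fun i => by
    induction i with
    | zero => exact hle 0 n.zero_le
    | succ i ih => exact hstable ih
  exact (Submodule.fg_span ((Set.finite_Iio n).image _)).of_le
    (Submodule.span_le.mpr (Set.range_subset_iff.mpr hall))

lemma isSkewAlgebraic_of_not_linearIndependent {a : L}
    (h : ¬ LinearIndependent K fun i => skewN σ i a) : IsSkewAlgebraic σ K a := by
  obtain ⟨s, g, hg, i₀, hi₀, hgi₀⟩ := not_linearIndependent_iff.mp h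
  set P : L[X] := ∑ i ∈ s, monomial i (g i : L)
  have hcoeff : ∀ j, P.coeff j = if j ∈ s then (g j : L) else 0 := fun j => by
    simp [P, coeff_monomial]
  have hsupp : P.support ⊆ s := fun j hj => by
    by_contra hjs
    exact mem_support_iff.mp hj (by rw [hcoeff, if_neg hjs])
  refine ⟨P, fun hP => hgi₀ ?_, fun j => ?_, ?_⟩
  · have := hcoeff i₀
    rw [hP, coeff_zero, if_pos hi₀] at this
    exact Subtype.ext this.symm
  · rw [hcoeff]
    split_ifs
    exacts [(g j).2, K.zero_mem]
  · rw [skewEval_eq_sum_of_support_subset σ hsupp]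
    refine Eq.trans (Finset.sum_congr rfl fun i hi => ?_) hg
    rw [hcoeff, if_pos hi]
    rfl

lemma isSkewAlgebraic_of_fg_skewNSpan {a : L} (h : (skewNSpan σ K a).FG) :
    IsSkewAlgebraic σ K a := by
  obtain ⟨S, hS⟩ := h
  exact isSkewAlgebraic_of_not_linearIndependent fun hli =>
    (hli.finite_of_le_span_finite _ S (hS ▸ Submodule.subset_span)).false

lemma IsSkewAlgebraic.map (hK : ∀ x ∈ K, σ x ∈ K) {a : L} (ha : IsSkewAlgebraic σ K a) :
    IsSkewAlgebraic σ K (σ a) := by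
  obtain ⟨P, hP0, hPK, hPa⟩ := ha
  refine ⟨P.map σ, (Polynomial.map_ne_zero_iff σ.injective).mpr hP0, fun i => ?_, ?_⟩
  · rw [coeff_map]
    exact hK _ (hPK i)
  · rw [skewEval_map_apply, hPa, map_zero]

lemma IsSkewAlgebraic.mul (hK : ∀ x ∈ K, σ x ∈ K) {a b : L} (ha : IsSkewAlgebraic σ K a)
    (hb : IsSkewAlgebraic σ K b) : IsSkewAlgebraic σ K (a * b) :=
  isSkewAlgebraic_of_fg_skewNSpan <|
    ((ha.fg_skewNSpan hK).mul (hb.fg_skewNSpan hK)).of_le (skewNSpan_mul_le a b)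

end SkewAlgebraic

/-- If `a` and `b` are σ-algebraic over `K`, then so are `σ(a)` and `a·b`. -/
theorem stmt_7 {L : Type*} [Field L] (σL : L →+* L) (K : Subfield L)
    (hK : ∀ x ∈ K, σL x ∈ K) (a b : L)
    (ha : IsSkewAlgebraic σL K a) (hb : IsSkewAlgebraic σL K b) :
    IsSkewAlgebraic σL K (σL a) ∧ IsSkewAlgebraic σL K (a * b) :=
  ⟨ha.map hK, ha.mul hK hb⟩
end

section
/- Let (K, σ) be a σ-field with σ an automorphism of K, σ ≠ id_K. If α : K[T;σ] → K[T;σ] is an anti-automorphism, then: (1) α(K) = K and the restriction α_0 of α to K is a field automorphism of K; (2) there exists a_0 ∈ K, a_0 ≠ 0, with α(T) = a_0·T; (3) σ∘α_0∘σ = α_0. Conversely, if α_0 : K → K is a field automorphism satisfying σ∘α_0∘σ = α_0, then for every nonzero a_0 ∈ K there exists a unique anti-automorphism α of K[T;σ] with α(T) = a_0·T whose restriction to K is α_0. -/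
/-!
An anti-automorphism `α` of `K[T;σ]` maps the units `C c` to units, which are constants, so it
restricts to a ring endomorphism `α₀` of the commutative field `K`. Applying `α` to
`T c = σ(c) T` gives `α₀(c) eᵢ = eᵢ σⁱ(α₀(σ c))` for the coefficients `eᵢ` of `α(T)`; since
`σ ≠ id` this forces `e₀ = 0`, so `d = deg α(T) ≥ 1`. Then `α` multiplies degrees by `d`, and
surjectivity of `α` gives `d = 1` and surjectivity of `α₀`; the relation for `i = 1` is
`σ ∘ α₀ ∘ σ = α₀`.

Conversely, `Σ pₙ Tⁿ ↦ Σ (a₀T)ⁿ α₀(pₙ)` acts bijectively coefficient by coefficient, and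
`σ ∘ α₀ ∘ σ = α₀` is exactly what makes it reverse products. Uniqueness holds because an additive
anti-multiplicative map is determined by its values on `K` and on `T`.
-/

open Polynomial

variable {K : Type*} [Field K]

/-- `α` is an anti-automorphism of the skew polynomial ring `K[T;σ]`: a bijective additive
map with `α(1) = 1` and `α(P·Q) = α(Q)·α(P)`. -/
def IsSkewAntiAuto (σ : K →+* K) (α : Polynomial K → Polynomial K) : Prop :=
  Function.Bijective α ∧ (∀ P Q : Polynomial K, α (P + Q) = α P + α Q) ∧
    α 1 = 1 ∧ ∀ P Q : Polynomial K, α (skewMul σ P Q) = skewMul σ (α Q) (α P)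

open Finset.HasAntidiagonal

section SkewMul

variable (σ : K →+* K)

theorem coeff_skewMul (P Q : K[X]) (n : ℕ) :
    (skewMul σ P Q).coeff n =
      ∑ p ∈ antidiagonal n, P.coeff p.1 * (⇑σ)^[p.1] (Q.coeff p.2) := by
  simp only [skewMul, finsetSum_coeff, coeff_C_mul_X_pow]
  rw [← Finset.sum_product', ← Finset.sum_filter]
  refine Finset.sum_subset (fun p hp => ?_) (fun p hp hnp => ?_)
  · exact mem_antidiagonal.2 (Finset.mem_filter.1 hp).2.symm
  · have hn := (mem_antidiagonal.1 hp).symm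
    simp only [Finset.mem_filter, Finset.mem_product, mem_support_iff, hn, and_true,
      not_and_or, not_not] at hnp
    rcases hnp with h | h <;> simp [h]

theorem skewMul_C_left (a : K) (Q : K[X]) :
    skewMul σ (C a) Q = C a * Q := by
  ext n
  simp [coeff_skewMul, coeff_C, Finset.Nat.sum_antidiagonal_eq_sum_range_succ_mk]

theorem coeff_skewMul_C (P : K[X]) (b : K) (n : ℕ) :
    (skewMul σ P (C b)).coeff n = P.coeff n * (⇑σ)^[n] b := by
  rw [coeff_skewMul, ← Finset.Nat.sum_antidiagonal_swap]
  simp [coeff_C, Finset.Nat.sum_antidiagonal_eq_sum_range_succ_mk, Finset.sum_range_succ']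

theorem skewMul_X_left (Q : K[X]) :
    skewMul σ X Q = X * Q.map σ := by
  ext (_ | n)
  · simp [coeff_skewMul]
  · simp [coeff_skewMul, coeff_X, Finset.Nat.sum_antidiagonal_eq_sum_range_succ_mk]

theorem skewMul_X_X_pow (i : ℕ) : skewMul σ X (X ^ i) = X ^ (i + 1) := by
  rw [skewMul_X_left, Polynomial.map_pow, map_X, pow_succ']

theorem skewMul_X_C (c : K) : skewMul σ X (C c) = C (σ c) * X := by
  rw [skewMul_X_left, map_C, X_mul_C]

theorem skewMul_zero_left (Q : K[X]) : skewMul σ 0 Q = 0 := by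
  simp [skewMul]

theorem skewMul_zero_right (P : K[X]) : skewMul σ P 0 = 0 := by
  simp [skewMul]

theorem skewMul_term_eq_zero {P Q : K[X]} {i j : ℕ}
    (h : P.natDegree < i ∨ Q.natDegree < j) : P.coeff i * (⇑σ)^[i] (Q.coeff j) = 0 := by
  rcases h with h | h
  · rw [coeff_eq_zero_of_natDegree_lt h, zero_mul]
  · rw [coeff_eq_zero_of_natDegree_lt h, iterate_map_zero, mul_zero]

theorem natDegree_skewMul_le (P Q : K[X]) :
    (skewMul σ P Q).natDegree ≤ P.natDegree + Q.natDegree := by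
  refine natDegree_le_iff_coeff_eq_zero.2 fun N hN => ?_
  refine (coeff_skewMul σ P Q N).trans (Finset.sum_eq_zero fun p hp => ?_)
  exact skewMul_term_eq_zero σ (by rw [mem_antidiagonal] at hp; omega)

theorem coeff_skewMul_natDegree_add (P Q : K[X]) :
    (skewMul σ P Q).coeff (P.natDegree + Q.natDegree) =
      P.leadingCoeff * (⇑σ)^[P.natDegree] Q.leadingCoeff := by
  rw [coeff_skewMul, Finset.sum_eq_single_of_mem (P.natDegree, Q.natDegree)
    (mem_antidiagonal.2 rfl)]
  · rfl
  rintro ⟨i, j⟩ hij hne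
  rw [mem_antidiagonal] at hij
  exact skewMul_term_eq_zero σ (by grind)

theorem coeff_skewMul_natDegree_add_ne_zero {P Q : K[X]} (hP : P ≠ 0)
    (hQ : Q ≠ 0) : (skewMul σ P Q).coeff (P.natDegree + Q.natDegree) ≠ 0 := by
  rw [coeff_skewMul_natDegree_add, ← RingHom.coe_pow]
  exact mul_ne_zero (leadingCoeff_ne_zero.2 hP) 
    ((_root_.map_ne_zero _).2 (leadingCoeff_ne_zero.2 hQ))

theorem skewMul_ne_zero {P Q : K[X]} (hP : P ≠ 0) (hQ : Q ≠ 0) :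
    skewMul σ P Q ≠ 0 := fun h =>
  coeff_skewMul_natDegree_add_ne_zero σ hP hQ (by rw [h, coeff_zero])

theorem natDegree_skewMul {P Q : K[X]} (hP : P ≠ 0) (hQ : Q ≠ 0) :
    (skewMul σ P Q).natDegree = P.natDegree + Q.natDegree :=
  (natDegree_skewMul_le σ P Q).antisymm
    (le_natDegree_of_ne_zero (coeff_skewMul_natDegree_add_ne_zero σ hP hQ))

theorem natDegree_eq_zero_of_skewMul_eq_one {P Q : K[X]}
    (h : skewMul σ P Q = 1) : P.natDegree = 0 := by
  have hP : P ≠ 0 := by rintro rfl; simp [skewMul_zero_left] at h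
  have hQ : Q ≠ 0 := by rintro rfl; simp [skewMul_zero_right] at h
  have := natDegree_skewMul σ hP hQ
  rw [h, natDegree_one] at this
  omega

end SkewMul

structure IsSkewAntiHom (σ : K →+* K) (β : K[X] → K[X]) : Prop where
  map_add : ∀ P Q, β (P + Q) = β P + β Q
  map_one : β 1 = 1
  map_skewMul : ∀ P Q, β (skewMul σ P Q) = skewMul σ (β Q) (β P)

theorem isSkewAntiAuto_iff {σ : K →+* K} {α : K[X] → K[X]} :
    IsSkewAntiAuto σ α ↔ Function.Bijective α ∧ IsSkewAntiHom σ α :=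
  ⟨fun ⟨hbij, hadd, hone, hmul⟩ => ⟨hbij, hadd, hone, hmul⟩,
    fun ⟨hbij, hadd, hone, hmul⟩ => ⟨hbij, hadd, hone, hmul⟩⟩

namespace IsSkewAntiHom

variable {σ : K →+* K} {β : K[X] → K[X]} (hβ : IsSkewAntiHom σ β)
include hβ

noncomputable def toAddMonoidHom : K[X] →+ K[X] := AddMonoidHom.mk' β hβ.map_add

theorem map_zero : β 0 = 0 := hβ.toAddMonoidHom.map_zero

theorem map_X_pow_succ (i : ℕ) : β (X ^ (i + 1)) = skewMul σ (β (X ^ i)) (β X) := by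
  rw [← skewMul_X_X_pow, hβ.map_skewMul]

theorem map_monomial (i : ℕ) (c : K) : β (monomial i c) = skewMul σ (β (X ^ i)) (β (C c)) := by
  rw [← C_mul_X_pow_eq_monomial, ← skewMul_C_left, hβ.map_skewMul]

theorem eq_of_map_C_of_map_X {γ : K[X] → K[X]} (hγ : IsSkewAntiHom σ γ)
    (hC : ∀ c, β (C c) = γ (C c)) (hX : β X = γ X) : β = γ := by
  have hpow : ∀ i, β (X ^ i) = γ (X ^ i) := by
    intro i
    induction i with
    | zero => rw [pow_zero, hβ.map_one, hγ.map_one]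
    | succ i ih => rw [hβ.map_X_pow_succ, hγ.map_X_pow_succ, ih, hX]
  have h : hβ.toAddMonoidHom = hγ.toAddMonoidHom := Polynomial.addHom_ext fun i c => by
    simp only [toAddMonoidHom, AddMonoidHom.mk'_apply, hβ.map_monomial, hγ.map_monomial, hpow, hC]
  exact funext (DFunLike.congr_fun h)

theorem map_C_eq_C_coeff_zero (c : K) : β (C c) = C ((β (C c)).coeff 0) := by
  rcases eq_or_ne c 0 with rfl | hc
  · rw [C_0, hβ.map_zero, coeff_zero, C_0]
  refine eq_C_of_natDegree_eq_zero (natDegree_eq_zero_of_skewMul_eq_one σ (Q := β (C c⁻¹)) ?_)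
  rw [← hβ.map_skewMul, skewMul_C_left, ← C_mul, inv_mul_cancel₀ hc, C_1, hβ.map_one]

noncomputable def restrictC : K →+* K where
  toFun c := (β (C c)).coeff 0
  map_one' := by simp only [C_1, hβ.map_one, coeff_one_zero]
  map_mul' c d := by
    have h := hβ.map_skewMul (C d) (C c)
    rw [skewMul_C_left, ← C_mul, mul_comm, hβ.map_C_eq_C_coeff_zero c,
      hβ.map_C_eq_C_coeff_zero d, skewMul_C_left, ← C_mul] at h
    rw [h, coeff_C_zero]
  map_zero' := by simp only [C_0, hβ.map_zero, coeff_zero]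
  map_add' c d := by simp only [C_add, hβ.map_add, coeff_add]

theorem map_C (c : K) : β (C c) = C (hβ.restrictC c) := hβ.map_C_eq_C_coeff_zero c

theorem restrictC_mul_coeff_map_X (c : K) (n : ℕ) :
    hβ.restrictC c * (β X).coeff n = (β X).coeff n * (⇑σ)^[n] (hβ.restrictC (σ c)) := by
  have h := congrArg β (skewMul_X_C σ c)
  rw [← skewMul_C_left, hβ.map_skewMul, hβ.map_skewMul, hβ.map_C, hβ.map_C,
    skewMul_C_left] at h
  simpa only [coeff_C_mul, coeff_skewMul_C] using congrArg (coeff · n) h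

theorem coeff_map_X_zero (hσ : (σ : K → K) ≠ id) : (β X).coeff 0 = 0 := by
  obtain ⟨c, hc⟩ : ∃ c, σ c ≠ c := by
    by_contra! h
    exact hσ (funext h)
  have h := hβ.restrictC_mul_coeff_map_X c 0
  rw [Function.iterate_zero_apply, mul_comm] at h
  by_contra h0
  exact hc (hβ.restrictC.injective (mul_left_cancel₀ h0 h).symm)

theorem natDegree_map_X_pow (hX : β X ≠ 0) (i : ℕ) :
    β (X ^ i) ≠ 0 ∧ (β (X ^ i)).natDegree = i * (β X).natDegree := by
  induction i with
  | zero => simp [hβ.map_one]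
  | succ i ih =>
    rw [hβ.map_X_pow_succ]
    exact ⟨skewMul_ne_zero σ ih.1 hX, by rw [natDegree_skewMul σ ih.1 hX, ih.2, Nat.succ_mul]⟩

theorem natDegree_map_monomial (hX : β X ≠ 0) (i : ℕ) {c : K} (hc : c ≠ 0) :
    β (monomial i c) ≠ 0 ∧ (β (monomial i c)).natDegree = i * (β X).natDegree := by
  have hC : β (C c) ≠ 0 := by simpa [hβ.map_C] using hc
  obtain ⟨hpow, hdeg⟩ := hβ.natDegree_map_X_pow hX i
  rw [hβ.map_monomial]
  refine ⟨skewMul_ne_zero σ hpow hC, ?_⟩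
  rw [natDegree_skewMul σ hpow hC, hdeg, hβ.map_C, natDegree_C, add_zero]

/-- The images of the monomials of `P` have pairwise distinct degrees, so none of them cancel. -/
theorem natDegree_map (hd : 0 < (β X).natDegree) (P : K[X]) :
    (β P).natDegree = P.natDegree * (β X).natDegree := by
  have hX : β X ≠ 0 := ne_zero_of_natDegree_gt hd
  have hterm : ∀ i ∈ P.support, (β (monomial i (P.coeff i))).natDegree = i * (β X).natDegree :=
    fun i hi => (hβ.natDegree_map_monomial hX i (mem_support_iff.1 hi)).2
  have hsum : β P = ∑ i ∈ P.support, β (monomial i (P.coeff i)) := by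
    conv_lhs => rw [P.as_sum_support]
    exact map_sum hβ.toAddMonoidHom _ _
  rw [hsum, natDegree_sum_eq_of_disjoint]
  · refine le_antisymm (Finset.sup_le fun i hi => ?_) ?_
    · rw [hterm i hi]
      exact Nat.mul_le_mul_right _ (le_natDegree_of_mem_supp i hi)
    · rcases eq_or_ne P 0 with rfl | hP
      · simp
      · have hmem := natDegree_mem_support_of_nonzero hP
        exact Finset.le_sup_of_le hmem (hterm _ hmem).ge
  · rintro i ⟨hi, -⟩ j ⟨hj, -⟩ hij
    simp only [Function.onFun, Function.comp_apply, hterm i hi, hterm j hj]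
    exact fun h => hij (Nat.eq_of_mul_eq_mul_right hd h)

end IsSkewAntiHom

theorem IsSkewAntiAuto.exists_ringEquiv {σ : K →+* K} (hσ : (σ : K → K) ≠ id)
    {α : K[X] → K[X]} (hα : IsSkewAntiAuto σ α) :
    ∃ α₀ : K ≃+* K, (∀ c, α (C c) = C (α₀ c)) ∧ (∀ x, σ (α₀ (σ x)) = α₀ x) ∧
      ∃ a₀ : K, a₀ ≠ 0 ∧ α X = C a₀ * X := by
  obtain ⟨hbij, hβ⟩ := isSkewAntiAuto_iff.1 hα
  have hX0 := hβ.coeff_map_X_zero hσ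
  have hd : 0 < (α X).natDegree := by
    refine Nat.pos_of_ne_zero fun h => X_ne_zero (hbij.1 ?_)
    rw [hβ.map_zero, eq_C_of_natDegree_eq_zero h, hX0, C_0]
  have hdeg := hβ.natDegree_map hd
  have hd1 : (α X).natDegree = 1 := by
    obtain ⟨P, hP⟩ := hbij.2 X
    have h := hdeg P
    rw [hP, natDegree_X] at h
    exact Nat.eq_one_of_mul_eq_one_left h.symm
  have hsurj : Function.Surjective hβ.restrictC := fun y => by
    obtain ⟨P, hP⟩ := hbij.2 (C y)
    have hP0 : P.natDegree = 0 := by simpa [hP, hd1, eq_comm] using hdeg P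
    refine ⟨P.coeff 0, C_injective ?_⟩
    rw [← hβ.map_C, ← eq_C_of_natDegree_eq_zero hP0, hP]
  have hXeq : α X = C ((α X).coeff 1) * X := by
    simpa [hX0] using eq_X_add_C_of_natDegree_le_one hd1.le
  have ha : (α X).coeff 1 ≠ 0 := by
    rw [← hd1]
    exact leadingCoeff_ne_zero.2 (ne_zero_of_natDegree_gt hd)
  refine ⟨RingEquiv.ofBijective hβ.restrictC ⟨hβ.restrictC.injective, hsurj⟩, hβ.map_C,
    fun x => ?_, _, ha, hXeq⟩
  have h := hβ.restrictC_mul_coeff_map_X x 1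
  rw [Function.iterate_one, mul_comm] at h
  exact (mul_left_cancel₀ ha h).symm

section Coeffwise

variable {R : Type*} [Semiring R]

noncomputable def coeffwise (f : ℕ → R →+ R) : R[X] →+ R[X] where
  toFun P := P.sum fun n a => monomial n (f n a)
  map_zero' := sum_zero_index _
  map_add' P Q := sum_add_index P Q _ (fun n => by simp) (fun n a b => by simp)

theorem coeff_coeffwise (f : ℕ → R →+ R) (P : R[X]) (n : ℕ) :
    (coeffwise f P).coeff n = f n (P.coeff n) := by
  simp only [coeffwise, AddMonoidHom.coe_mk, ZeroHom.coe_mk, Polynomial.sum_def,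
    finsetSum_coeff, coeff_monomial, Finset.sum_ite_eq']
  split_ifs with h
  · rfl
  · rw [notMem_support_iff.1 h, map_zero]

theorem coeffwise_bijective {f : ℕ → R →+ R} (hf : ∀ n, Function.Bijective (f n)) :
    Function.Bijective (coeffwise f) := by
  refine ⟨fun P Q h => ext fun n => (hf n).1 ?_, fun Q => ?_⟩
  · rw [← coeff_coeffwise, h, coeff_coeffwise]
  · refine ⟨coeffwise (fun n => (AddEquiv.ofBijective (f n) (hf n)).symm.toAddMonoidHom) Q, ?_⟩
    ext n
    rw [coeff_coeffwise, coeff_coeffwise]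
    exact (AddEquiv.ofBijective (f n) (hf n)).apply_symm_apply _

end Coeffwise

section SkewN

variable (σ : K →+* K)

theorem skewN_one (a : K) : skewN σ 1 a = a := by
  simp [skewN]

theorem skewN_add (a : K) (i j : ℕ) :
    skewN σ (i + j) a = skewN σ i a * (⇑σ)^[i] (skewN σ j a) := by
  induction i with
  | zero => simp [skewN]
  | succ i ih =>
    rw [add_right_comm, skewN, ih, skewN, map_mul, Function.iterate_succ_apply']
    ring

theorem skewN_ne_zero {a : K} (ha : a ≠ 0) (n : ℕ) : skewN σ n a ≠ 0 := by
  induction n with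
  | zero => exact one_ne_zero
  | succ n ih => exact mul_ne_zero ((map_ne_zero σ).2 ih) ha

end SkewN

theorem Function.iterate_apply_apply_iterate {α : Type*} {f g : α → α}
    (h : ∀ x, f (g (f x)) = g x) (n : ℕ) (x : α) : f^[n] (g (f^[n] x)) = g x := by
  induction n generalizing x with
  | zero => rfl
  | succ n ih => rw [Function.iterate_succ_apply, Function.iterate_succ_apply', h, ih]

/-- The candidate `Σ pₙ Tⁿ ↦ Σ (a₀T)ⁿ α₀(pₙ)`; since `(a₀T)ⁿ = skewN σ n a₀ · Tⁿ` and
`Tⁿ c = σⁿ(c) Tⁿ`, its `n`-th coefficient is `skewN σ n a₀ · σⁿ(α₀ pₙ)`. -/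
noncomputable def skewAntiHom (σ α₀ : K →+* K) (a₀ : K) : K[X] →+ K[X] :=
  coeffwise fun n =>
    (AddMonoidHom.mulLeft (skewN σ n a₀)).comp ((σ ^ n).toAddMonoidHom.comp α₀.toAddMonoidHom)

section SkewAntiHom

variable (σ α₀ : K →+* K) (a₀ : K)

theorem coeff_skewAntiHom (P : K[X]) (n : ℕ) :
    (skewAntiHom σ α₀ a₀ P).coeff n = skewN σ n a₀ * (⇑σ)^[n] (α₀ (P.coeff n)) := by
  simp [skewAntiHom, coeff_coeffwise, RingHom.coe_pow]

theorem skewAntiHom_C (c : K) : skewAntiHom σ α₀ a₀ (C c) = C (α₀ c) := by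
  ext (_ | n) <;> simp [coeff_skewAntiHom, coeff_C, skewN]

theorem skewAntiHom_X : skewAntiHom σ α₀ a₀ X = C a₀ * X := by
  ext (_ | _ | n) <;> simp [coeff_skewAntiHom, coeff_X, skewN_one]

theorem skewAntiHom_bijective (hσ : Function.Surjective σ) (hα₀ : Function.Surjective α₀)
    (ha₀ : a₀ ≠ 0) : Function.Bijective (skewAntiHom σ α₀ a₀) := by
  refine coeffwise_bijective fun n => ?_
  simp only [AddMonoidHom.coe_comp, RingHom.toAddMonoidHom_eq_coe, AddMonoidHom.coe_coe,
    RingHom.coe_pow]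
  exact (Units.mk0 _ (skewN_ne_zero σ ha₀ n)).mulLeft.bijective.comp
    ((Function.Bijective.iterate ⟨σ.injective, hσ⟩ n).comp ⟨α₀.injective, hα₀⟩)

variable {σ α₀} in
theorem skewAntiHom_skewMul (h : ∀ x, σ (α₀ (σ x)) = α₀ x) (P Q : K[X]) :
    skewAntiHom σ α₀ a₀ (skewMul σ P Q) =
      skewMul σ (skewAntiHom σ α₀ a₀ Q) (skewAntiHom σ α₀ a₀ P) := by
  ext n
  rw [coeff_skewAntiHom, coeff_skewMul, coeff_skewMul, ← Finset.Nat.sum_antidiagonal_swap,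
    map_sum, ← RingHom.coe_pow, map_sum, Finset.mul_sum]
  refine Finset.sum_congr rfl fun ⟨i, j⟩ hij => ?_
  rw [mem_antidiagonal] at hij
  subst hij
  simp only [Prod.swap_prod_mk, coeff_skewAntiHom, RingHom.coe_pow, map_mul, iterate_map_mul,
    skewN_add, Function.iterate_add_apply, Function.iterate_apply_apply_iterate h]
  ring

variable {σ α₀} in
theorem isSkewAntiHom_skewAntiHom (h : ∀ x, σ (α₀ (σ x)) = α₀ x) :
    IsSkewAntiHom σ (skewAntiHom σ α₀ a₀) where
  map_add := map_add _
  map_one := by rw [← C_1, skewAntiHom_C, map_one]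
  map_skewMul := skewAntiHom_skewMul a₀ h

end SkewAntiHom

/-- Characterization of the anti-automorphisms of `K[T;σ]` for an automorphism `σ ≠ id`:
every anti-automorphism `α` restricts to a field automorphism `α₀` of `K` satisfying
`σ∘α₀∘σ = α₀` and sends `T` to `a₀·T` for some `a₀ ≠ 0`; conversely, every such pair
`(α₀, a₀)` arises from a unique anti-automorphism. -/
theorem stmt_10 {K : Type*} [Field K] (σ : K ≃+* K) (hσ : (σ : K → K) ≠ id) :
    (∀ α : Polynomial K → Polynomial K, IsSkewAntiAuto σ.toRingHom α →
      ∃ α₀ : K ≃+* K, (∀ c : K, α (Polynomial.C c) = Polynomial.C (α₀ c)) ∧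
        (∀ x : K, σ (α₀ (σ x)) = α₀ x) ∧
        ∃ a₀ : K, a₀ ≠ 0 ∧ α Polynomial.X = Polynomial.C a₀ * Polynomial.X) ∧
    (∀ α₀ : K ≃+* K, (∀ x : K, σ (α₀ (σ x)) = α₀ x) → ∀ a₀ : K, a₀ ≠ 0 →
      ∃! α : Polynomial K → Polynomial K, IsSkewAntiAuto σ.toRingHom α ∧
        α Polynomial.X = Polynomial.C a₀ * Polynomial.X ∧
        ∀ c : K, α (Polynomial.C c) = Polynomial.C (α₀ c)) := by
  refine ⟨fun α hα => hα.exists_ringEquiv hσ, fun α₀ hconj a₀ ha₀ => ?_⟩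
  have hhom : IsSkewAntiHom σ.toRingHom (skewAntiHom σ.toRingHom α₀.toRingHom a₀) :=
    isSkewAntiHom_skewAntiHom a₀ hconj
  refine ⟨skewAntiHom σ.toRingHom α₀.toRingHom a₀, ⟨isSkewAntiAuto_iff.2 ⟨?_, hhom⟩,
    skewAntiHom_X _ _ a₀, skewAntiHom_C _ _ a₀⟩, fun β ⟨hβ, hX, hC⟩ => ?_⟩
  · exact skewAntiHom_bijective _ _ a₀ σ.surjective α₀.surjective ha₀
  · exact (isSkewAntiAuto_iff.1 hβ).2.eq_of_map_C_of_map_X hhom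
      (fun c => by rw [hC, skewAntiHom_C]; rfl) (by rw [hX, skewAntiHom_X])
end
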